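/- There exists a directed strongly regular graph with parameters (22,9,6,3,4) whose full automorphism group has order 6 and is isomorphic to the symmetric group S_3; in particular, there exists a directed strongly regular graph with parameters (22,9,6,3,4) admitting an automorphism of order two. -/

import Mathlib

open Matrix BigOperators

def adjM {V : Type} [Fintype V] (E : V → V → Bool) : Matrix V V ℤ :=
  Matrix.of fun x y => if E x y then 1 else 0

def IsDSRG {V : Type} [Fintype V] [DecidableEq V] (E : V → V → Bool)
    (v k t l m : ℕ) : Prop :=
  Fintype.card V = v ∧ (∀ x, E x x = false) ∧
  adjM E * adjM E + ((m : ℤ) - (l : ℤ)) • adjM E - ((t : ℤ) - (m : ℤ)) • (1 : Matrix V V ℤ)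
    = (m : ℤ) • Matrix.of (fun _ _ => (1 : ℤ)) ∧
  adjM E * Matrix.of (fun _ _ => (1 : ℤ)) = (k : ℤ) • Matrix.of (fun _ _ => (1 : ℤ)) ∧
  Matrix.of (fun _ _ => (1 : ℤ)) * adjM E = (k : ℤ) • Matrix.of (fun _ _ => (1 : ℤ))

def IsAut {V : Type} (E : V → V → Bool) (σ : Equiv.Perm V) : Prop :=
  ∀ x y, E (σ x) (σ y) = E x y

def autGroup {V : Type} (E : V → V → Bool) : Subgroup (Equiv.Perm V) where
  carrier := {σ | ∀ x y, E (σ x) (σ y) = E x y}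
  one_mem' := fun _ _ => rfl
  mul_mem' := by
    intro a b ha hb x y
    simp only [Equiv.Perm.coe_mul, Function.comp_apply]
    rw [ha, hb]
  inv_mem' := by
    intro a ha x y
    have := ha (a⁻¹ x) (a⁻¹ y)
    simpa [Equiv.Perm.coe_inv] using this.symm

def Iso {V W : Type} (E : V → V → Bool) (F : W → W → Bool) : Prop :=
  ∃ φ : V ≃ W, ∀ x y, F (φ x) (φ y) = E x y

/-!
The graph below is invariant under `S₃` permuting the three vertices inside each of the blocks
`{3b, 3b+1, 3b+2}` (`b < 7`) and fixing vertex `21`; its DSRG equations are checked by counting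
paths of length two. Conversely, counting the arcs among the mutual neighbours of a vertex is an
automorphism invariant which singles out vertex `21` and, together with having no arc to `21`,
the block `{15, 16, 17}`. So an automorphism fixes `21` and moves `15, 16` inside that block,
where some element of `S₃` does the same; as the arcs to and from `15, 16, 21` separate all
vertices, the two automorphisms coincide.
-/

open Finset Equiv

section Counting

variable {V : Type} [Fintype V] (E : V → V → Bool)

lemma adjM_mul_adjM_apply (x y : V) : (adjM E * adjM E) x y = #{z | E x z ∧ E z y} := by
  rw [mul_apply, ← sum_boole]
  refine sum_congr rfl fun z _ => ?_
  by_cases hxz : E x z <;> by_cases hzy : E z y <;> simp [adjM, hxz, hzy]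

lemma adjM_mul_allOnes_apply (x y : V) :
    (adjM E * of fun _ _ => (1 : ℤ) : Matrix V V ℤ) x y = #{z | E x z} := by
  simp [mul_apply, adjM]

lemma allOnes_mul_adjM_apply (x y : V) :
    ((of fun _ _ => (1 : ℤ)) * adjM E : Matrix V V ℤ) x y = #{z | E z y} := by
  simp [mul_apply, adjM]

theorem isDSRG_of_card_filter [DecidableEq V] {v k t l m : ℕ} (hv : Fintype.card V = v)
    (hirrefl : ∀ x, E x x = false)
    (hpaths : ∀ x y, #{z | E x z ∧ E z y} = if x = y then t else if E x y then l else m)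
    (hout : ∀ x, #{z | E x z} = k) (hin : ∀ y, #{z | E z y} = k) :
    IsDSRG E v k t l m := by
  refine ⟨hv, hirrefl, ?_, ?_, ?_⟩
  · ext x y
    simp only [Matrix.sub_apply, Matrix.add_apply, Matrix.smul_apply, adjM_mul_adjM_apply, hpaths,
      one_apply]
    by_cases hxy : x = y
    · subst hxy; simp [adjM, hirrefl]
    · by_cases hE : E x y <;> simp [adjM, hxy, hE]
  · ext x y; simp [adjM_mul_allOnes_apply, hout]
  · ext x y; simp [allOnes_mul_adjM_apply, hin]

end Counting

section Automorphisms

variable {V : Type} {E : V → V → Bool} {σ τ : Perm V}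

lemma eq_of_mem_autGroup_of_eqOn {S : Finset V}
    (hS : ∀ y z, (∀ s ∈ S, E s y = E s z ∧ E y s = E z s) → y = z)
    (hσ : σ ∈ autGroup E) (hτ : τ ∈ autGroup E) (h : ∀ s ∈ S, σ s = τ s) :
    σ = τ := by
  ext y
  suffices τ⁻¹ (σ y) = y by simpa using congrArg τ this
  refine hS _ _ fun s hs => ⟨?_, ?_⟩
  · simpa [← h s hs, hσ s y] using (hτ s (τ⁻¹ (σ y))).symm
  · simpa [← h s hs, hσ y s] using (hτ (τ⁻¹ (σ y)) s).symm

def mutualArcCount [Fintype V] (E : V → V → Bool) (x : V) : ℕ :=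
  #{p : V × V | E x p.1 ∧ E p.1 x ∧ E x p.2 ∧ E p.2 x ∧ E p.1 p.2}

lemma mutualArcCount_apply_of_mem_autGroup [Fintype V] (hσ : σ ∈ autGroup E) (x : V) :
    mutualArcCount E (σ x) = mutualArcCount E x := by
  have hσ' : ∀ a b, E (σ a) (σ b) = E a b := hσ
  exact (card_equiv (σ.prodCongr σ) fun p => by simp [hσ']).symm

end Automorphisms

def dsrg22Rows : Fin 22 → ℕ :=
  ![0b0000001001111111000001,
    0b0000000101111110100001,
    0b0000000011111110010001,
    0b0110001001001000111001,
    0b1010000100100101010101,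
    0b1100000010010011100011,
    0b1000000001111110000110,
    0b0100000001111110001010,
    0b0010000001111110001100,
    0b1001000110000110111000,
    0b0100101010001011010100,
    0b0010011100001101100010,
    0b0111001000110001001001,
    0b1010100101010000100101,
    0b1100010011100000010011,
    0b1001110110000000111000,
    0b0101111010000001010100,
    0b0011111100000001100010,
    0b1001110110000001000110,
    0b0101111010000000101010,
    0b0011111100000000011100,
    0b1111110000000000001110]

-- The `y`-th binary digit of row `x`, read from the left, records the arc `x → y`.
def dsrg22 (x y : Fin 22) : Bool := (dsrg22Rows x).testBit (21 - y)

theorem isDSRG_dsrg22 : IsDSRG dsrg22 22 9 6 3 4 :=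
  isDSRG_of_card_filter dsrg22 (Fintype.card_fin 22) (by decide) (by decide) (by decide)
    (by decide)

-- Vertex `3 * b + i` corresponds to `some (b, i)` and vertex `21` to `none`.
def blockEquiv : Fin 22 ≃ Option (Fin 7 × Fin 3) :=
  finSuccEquivLast.trans (finProdFinEquiv (m := 7) (n := 3)).symm.optionCongr

def blockAction : Perm (Fin 3) →* Perm (Fin 22) :=
  blockEquiv.symm.permCongrHom.toMonoidHom.comp
    { toFun := fun g => ((Equiv.refl (Fin 7)).prodCongr g).optionCongr
      map_one' := by ext x; simp
      map_mul' := by intro g h; ext x; simp }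

lemma blockAction_injective : Function.Injective blockAction := by
  intro g h hgh
  refine Equiv.ext fun i => ?_
  simpa [blockAction] using congrArg (fun σ => blockEquiv (σ (blockEquiv.symm (some (0, i))))) hgh

lemma isAut_blockAction : ∀ g, IsAut dsrg22 (blockAction g) := by
  unfold IsAut
  decide

lemma blockAction_apply_last : ∀ g, blockAction g 21 = 21 := by
  decide

lemma mutualArcCount_dsrg22_eq_six_iff : ∀ x, mutualArcCount dsrg22 x = 6 ↔ x = 21 := by
  decide

lemma mutualArcCount_dsrg22_eq_thirteen_and_iff : ∀ x,
    mutualArcCount dsrg22 x = 13 ∧ dsrg22 x 21 = false ↔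
      x ∈ ({15, 16, 17} : Finset (Fin 22)) := by
  decide

lemma dsrg22_resolved : ∀ y z : Fin 22,
    (∀ s ∈ ({15, 16, 21} : Finset (Fin 22)),
      dsrg22 s y = dsrg22 s z ∧ dsrg22 y s = dsrg22 z s) → y = z := by
  decide

lemma exists_blockAction_apply_eq : ∀ a ∈ ({15, 16, 17} : Finset (Fin 22)),
    ∀ b ∈ ({15, 16, 17} : Finset (Fin 22)), a ≠ b →
      ∃ g, blockAction g 15 = a ∧ blockAction g 16 = b := by
  decide

lemma mem_range_blockAction_of_mem_autGroup {σ : Perm (Fin 22)} (hσ : σ ∈ autGroup dsrg22) :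
    σ ∈ blockAction.range := by
  have hinv := mutualArcCount_apply_of_mem_autGroup hσ
  have h21 : σ 21 = 21 := (mutualArcCount_dsrg22_eq_six_iff _).1 <|
    (hinv 21).trans ((mutualArcCount_dsrg22_eq_six_iff 21).2 rfl)
  have hblock : ∀ x ∈ ({15, 16, 17} : Finset (Fin 22)),
      σ x ∈ ({15, 16, 17} : Finset (Fin 22)) := by
    intro x hx
    obtain ⟨hcount, hnot⟩ := (mutualArcCount_dsrg22_eq_thirteen_and_iff x).2 hx
    refine (mutualArcCount_dsrg22_eq_thirteen_and_iff _).1 ⟨(hinv x).trans hcount, ?_⟩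
    rw [← h21]
    exact (hσ x 21).trans hnot
  obtain ⟨g, h15, h16⟩ := exists_blockAction_apply_eq _ (hblock 15 (by decide)) _
    (hblock 16 (by decide)) (σ.injective.ne (by decide))
  refine ⟨g, eq_of_mem_autGroup_of_eqOn dsrg22_resolved (isAut_blockAction g) hσ ?_⟩
  simp only [Finset.mem_insert, Finset.mem_singleton, forall_eq_or_imp, forall_eq]
  exact ⟨h15, h16, (blockAction_apply_last g).trans h21.symm⟩

lemma range_blockAction : blockAction.range = autGroup dsrg22 :=
  le_antisymm (by rintro _ ⟨g, rfl⟩; exact isAut_blockAction g)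
    fun _ => mem_range_blockAction_of_mem_autGroup

/-- there exists a DSRG(22,9,6,3,4) whose full automorphism group has
order 6 and is isomorphic to `S₃`; in particular there exists a DSRG(22,9,6,3,4)
admitting an automorphism of order two. -/
theorem exists_DSRG_22_with_full_automorphism_group_S3 :
    (∃ E : Fin 22 → Fin 22 → Bool, IsDSRG E 22 9 6 3 4 ∧
      Nat.card (autGroup E) = 6 ∧
      Nonempty (autGroup E ≃* Equiv.Perm (Fin 3))) ∧
    (∃ E : Fin 22 → Fin 22 → Bool, IsDSRG E 22 9 6 3 4 ∧
      ∃ σ : Equiv.Perm (Fin 22), IsAut E σ ∧ orderOf σ = 2) := by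
  let e : autGroup dsrg22 ≃* Perm (Fin 3) :=
    (MulEquiv.subgroupCongr range_blockAction.symm).trans
      (MonoidHom.ofInjective blockAction_injective).symm
  refine ⟨⟨dsrg22, isDSRG_dsrg22, ?_, ⟨e⟩⟩,
    ⟨dsrg22, isDSRG_dsrg22, blockAction (swap 0 1), isAut_blockAction _, ?_⟩⟩
  · rw [Nat.card_congr e.toEquiv, Nat.card_perm, Nat.card_eq_fintype_card, Fintype.card_fin]
    rfl
  · rw [orderOf_injective _ blockAction_injective]
    exact orderOf_eq_prime (by decide) (by decide)
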